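/- There exist constants C > 0 and k ∈ ℕ such that for every integer T ≥ 2 and every real V > 0 there exists a randomized bidding policy π over T rounds (which may depend on V) such that for every sequence (v_t, m_t)_{t=1}^T ⊂ [0,1]^2 with v_t = 1 for all t and Σ_{t=2}^T |m_t − m_{t−1}| ≤ V, the expected dynamic regret of π on this sequence is at most C · max{√(T·V), 1} · (1 + log T)^k; this is achieved by restarting a single-hint bidding algorithm every Δ_T = Θ(√(T/V)) rounds. -/

import Mathlib

/-- First-price auction reward: `r(b; v, m) = (v - b) · 1[b ≥ m]`. -/
noncomputable def fpaReward (b v m : ℝ) : ℝ := if m ≤ b then v - b else 0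

/-- A randomized bidding policy over `T` rounds: a probability space together with,
for each round `t`, a measurable map from (history of `(vₛ, mₛ)` for `s < t`, current
value `vₜ`, randomness `ω`) to a bid in `[0,1]`. Rounds are indexed `0, …, T-1`. -/
structure BidPolicy (T : ℕ) where
  Ω : Type
  [instMS : MeasurableSpace Ω]
  μ : MeasureTheory.Measure Ω
  isProb : MeasureTheory.IsProbabilityMeasure μ
  bid : (t : ℕ) → (Fin t → ℝ × ℝ) → ℝ → Ω → ℝ
  bid_mem : ∀ t h v ω, bid t h v ω ∈ Set.Icc (0:ℝ) 1
  bid_measurable : ∀ t, Measurable fun p : (Fin t → ℝ × ℝ) × ℝ × Ω => bid t p.1 p.2.1 p.2.2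

attribute [instance] BidPolicy.instMS

/-- The bid of the policy at round `t` on the sequence `(v, m)`, given randomness `ω`. -/
noncomputable def BidPolicy.bids {T : ℕ} (π : BidPolicy T) (v m : ℕ → ℝ) (t : ℕ)
    (ω : π.Ω) : ℝ :=
  π.bid t (fun s : Fin t => (v s, m s)) (v t) ω

/-- Expected dynamic regret of a policy on the sequence `(v, m)` over `T` rounds. -/
noncomputable def BidPolicy.expRegret {T : ℕ} (π : BidPolicy T) (v m : ℕ → ℝ) : ℝ :=
  ∫ ω, (∑ t ∈ Finset.range T,
    (max (v t - m t) 0 - fpaReward (π.bids v m t ω) (v t) (m t))) ∂π.μ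

/-- Temporal variation `Σ_{t=2}^T |m_t - m_{t-1}|` (rounds indexed `0, …, T-1`). -/
noncomputable def totalVariation (m : ℕ → ℝ) (T : ℕ) : ℝ :=
  ∑ t ∈ Finset.range (T - 1), |m (t + 1) - m t|

/-- Number of switches `Σ_{t=2}^T 1[m_t ≠ m_{t-1}]` (rounds indexed `0, …, T-1`). -/
noncomputable def numSwitches (m : ℕ → ℝ) (T : ℕ) : ℝ :=
  ∑ t ∈ Finset.range (T - 1), if m (t + 1) ≠ m t then 1 else 0

/-!
Bid the previous round's highest competing bid plus a margin `ε`. A round is lost only if the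
competing bid jumped by more than `ε`, which costs at most `1 ≤ |mₜ - mₜ₋₁| / ε`; a won round
overpays by at most `ε + |mₜ - mₜ₋₁|`. Summing, the regret is at most `1 + T ε + V + V / ε`,
and `ε = √(V / T)` balances this to `O(√(T V))`; the middle term is harmless because the
variation of a `[0, 1]`-valued sequence is also at most `T`, hence at most `√(T V)`.
-/

open MeasureTheory

noncomputable def BidPolicy.ofDeterministic {T : ℕ} (f : (t : ℕ) → (Fin t → ℝ × ℝ) → ℝ → ℝ)
    (hf_mem : ∀ t h v, f t h v ∈ Set.Icc (0 : ℝ) 1)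
    (hf_meas : ∀ t, Measurable fun p : (Fin t → ℝ × ℝ) × ℝ => f t p.1 p.2) : BidPolicy T where
  Ω := Unit
  μ := Measure.dirac ()
  isProb := inferInstance
  bid t h v _ := f t h v
  bid_mem t h v _ := hf_mem t h v
  bid_measurable t := (hf_meas t).comp (measurable_fst.prodMk (measurable_fst.comp measurable_snd))

theorem BidPolicy.expRegret_ofDeterministic {T : ℕ} (f : (t : ℕ) → (Fin t → ℝ × ℝ) → ℝ → ℝ)
    (hf_mem : ∀ t h v, f t h v ∈ Set.Icc (0 : ℝ) 1)
    (hf_meas : ∀ t, Measurable fun p : (Fin t → ℝ × ℝ) × ℝ => f t p.1 p.2) (v m : ℕ → ℝ) :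
    (BidPolicy.ofDeterministic (T := T) f hf_mem hf_meas).expRegret v m =
      ∑ t ∈ Finset.range T,
        (max (v t - m t) 0 - fpaReward (f t (fun s : Fin t => (v s, m s)) (v t)) (v t) (m t)) :=
  integral_dirac _ ()

-- `(h (Fin.last s)).2` is the previous round's highest competing bid.
noncomputable def trailingBid (ε : ℝ) : (t : ℕ) → (Fin t → ℝ × ℝ) → ℝ → ℝ
  | 0, _, _ => 1
  | s + 1, h, _ => max 0 (min ((h (Fin.last s)).2 + ε) 1)

theorem trailingBid_mem (ε : ℝ) (t : ℕ) (h : Fin t → ℝ × ℝ) (v : ℝ) :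
    trailingBid ε t h v ∈ Set.Icc (0 : ℝ) 1 := by
  cases t with
  | zero => exact ⟨zero_le_one, le_rfl⟩
  | succ s => exact ⟨le_max_left _ _, max_le zero_le_one (min_le_right _ _)⟩

theorem measurable_trailingBid (ε : ℝ) (t : ℕ) :
    Measurable fun p : (Fin t → ℝ × ℝ) × ℝ => trailingBid ε t p.1 p.2 := by
  cases t with
  | zero => exact measurable_const
  | succ s =>
    exact measurable_const.max <| Measurable.min
      ((measurable_snd.comp ((measurable_pi_apply (Fin.last s)).comp measurable_fst)).add_const ε)
      measurable_const

noncomputable def trailingBidPolicy (ε : ℝ) (T : ℕ) : BidPolicy T :=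
  .ofDeterministic (trailingBid ε) (trailingBid_mem ε) (measurable_trailingBid ε)

theorem regret_trailingBid_round_le {ε a b : ℝ} (hε : 0 < ε) (ha : 0 ≤ a)
    (hb : b ∈ Set.Icc (0 : ℝ) 1) :
    max (1 - b) 0 - fpaReward (max 0 (min (a + ε) 1)) 1 b ≤ ε + |b - a| + |b - a| / ε := by
  obtain ⟨hb0, hb1⟩ := hb
  rw [max_eq_right (le_min (by linarith) zero_le_one), max_eq_left (by linarith), fpaReward]
  have hdiv : 0 ≤ |b - a| / ε := div_nonneg (abs_nonneg _) hε.le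
  split_ifs with hwin
  · have : a - b ≤ |b - a| := neg_sub b a ▸ neg_le_abs _
    linarith [min_le_left (a + ε) 1]
  · have hbid : min (a + ε) 1 = a + ε := min_eq_left <| by
      by_contra! h
      rw [min_eq_right h.le] at hwin
      linarith
    have hjump : ε ≤ |b - a| := by linarith [le_abs_self (b - a)]
    linarith [(one_le_div hε).mpr hjump]

theorem totalVariation_nonneg (m : ℕ → ℝ) (T : ℕ) : 0 ≤ totalVariation m T :=
  Finset.sum_nonneg fun _ _ => abs_nonneg _

theorem totalVariation_le_of_mem_Icc {m : ℕ → ℝ} {T : ℕ}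
    (hm : ∀ t < T, m t ∈ Set.Icc (0 : ℝ) 1) : totalVariation m T ≤ T := by
  calc totalVariation m T ≤ ∑ _t ∈ Finset.range (T - 1), (1 : ℝ) := by
        refine Finset.sum_le_sum fun t ht => ?_
        rw [Finset.mem_range] at ht
        obtain ⟨h0, h1⟩ := hm t (by omega)
        obtain ⟨h0', h1'⟩ := hm (t + 1) (by omega)
        exact abs_le.mpr ⟨by linarith, by linarith⟩
    _ ≤ T := by simp

theorem expRegret_trailingBidPolicy_le {ε : ℝ} {T : ℕ} (hε : 0 < ε) (hT : 0 < T)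
    {v m : ℕ → ℝ} (hv : ∀ t < T, v t = 1) (hm : ∀ t < T, m t ∈ Set.Icc (0 : ℝ) 1) :
    (trailingBidPolicy ε T).expRegret v m ≤
      1 + T * ε + totalVariation m T + totalVariation m T / ε := by
  obtain ⟨n, rfl⟩ : ∃ n, T = n + 1 := ⟨T - 1, by omega⟩
  rw [trailingBidPolicy, BidPolicy.expRegret_ofDeterministic, Finset.sum_range_succ']
  have hfirst : max (v 0 - m 0) 0 - fpaReward 1 (v 0) (m 0) ≤ 1 := by
    obtain ⟨h0, h1⟩ := hm 0 (by omega)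
    simp only [hv 0 (by omega), fpaReward, h1, if_true, sub_self]
    linarith [max_le (by linarith : 1 - m 0 ≤ 1) zero_le_one]
  have hstep : ∀ i ∈ Finset.range n,
      max (v (i + 1) - m (i + 1)) 0 -
          fpaReward (trailingBid ε (i + 1) (fun s => (v s, m s)) (v (i + 1))) (v (i + 1)) (m (i + 1))
        ≤ ε + |m (i + 1) - m i| + |m (i + 1) - m i| / ε := by
    intro i hi
    rw [Finset.mem_range] at hi
    rw [hv (i + 1) (by omega)]
    exact regret_trailingBid_round_le hε (hm i (by omega)).1 (hm (i + 1) (by omega))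
  calc _ ≤ ∑ i ∈ Finset.range n, (ε + |m (i + 1) - m i| + |m (i + 1) - m i| / ε) + 1 :=
        add_le_add (Finset.sum_le_sum hstep) hfirst
    _ = n * ε + totalVariation m (n + 1) + totalVariation m (n + 1) / ε + 1 := by
        simp [Finset.sum_add_distrib, Finset.sum_div, totalVariation]
    _ ≤ _ := by push_cast; nlinarith

theorem le_sqrt_mul_of_le_of_le {x a b : ℝ} (hx : 0 ≤ x) (ha : x ≤ a) (hb : x ≤ b) :
    x ≤ √(a * b) :=
  Real.le_sqrt_of_sq_le (sq x ▸ mul_le_mul ha hb hx (hx.trans ha))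

/-- Restarted single-hint-algorithm upper bound: for known `V > 0` there is a policy
(restarting a single-hint bidding algorithm every `Θ(√(T/V))` rounds) whose expected
dynamic regret on every sequence with `v_t ≡ 1`, `m_t ∈ [0,1]` and temporal variation
at most `V` is `O(max {√(T·V), 1})` up to polylogarithmic factors in `T`. -/
theorem restart_single_hint_upper_bound :
    ∃ C : ℝ, 0 < C ∧ ∃ k : ℕ, ∀ T : ℕ, 2 ≤ T → ∀ V : ℝ, 0 < V →
      ∃ π : BidPolicy T,
        ∀ v m : ℕ → ℝ,
          (∀ t < T, v t = 1) → (∀ t < T, m t ∈ Set.Icc (0:ℝ) 1) →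
          totalVariation m T ≤ V →
          π.expRegret v m ≤
            C * max (Real.sqrt ((T : ℝ) * V)) 1 * (1 + Real.log T) ^ k := by
  refine ⟨4, by norm_num, 0, fun T hT V hV => ?_⟩
  have hT0 : (0 : ℝ) < T := by positivity
  set s := √((T : ℝ) * V)
  have hs : 0 < s := Real.sqrt_pos.2 (by positivity)
  have hss : s * s = T * V := Real.mul_self_sqrt (by positivity)
  have hε : 0 < s / T := div_pos hs hT0
  refine ⟨trailingBidPolicy (s / T) T, fun v m hv hm hTV => ?_⟩
  have hmargin : T * (s / T) = s := by field_simp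
  have hvar : totalVariation m T ≤ s :=
    le_sqrt_mul_of_le_of_le (totalVariation_nonneg m T) (totalVariation_le_of_mem_Icc hm) hTV
  have hjumps : totalVariation m T / (s / T) ≤ s :=
    calc totalVariation m T / (s / T) ≤ V / (s / T) := div_le_div_of_nonneg_right hTV hε.le
      _ = s := by rw [div_div_eq_mul_div, mul_comm, ← hss]; field_simp
  calc (trailingBidPolicy (s / T) T).expRegret v m
      ≤ 1 + T * (s / T) + totalVariation m T + totalVariation m T / (s / T) :=
        expRegret_trailingBidPolicy_le hε (by omega) hv hm
    _ ≤ 1 + s + s + s := by linarith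
    _ ≤ 4 * max s 1 * (1 + Real.log T) ^ 0 := by
        rw [pow_zero, mul_one]; linarith [le_max_left s 1, le_max_right s 1]
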